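/- arXiv:1209.6205 — 6 statements merged into one kernel-verified Lean document; each statement's English description precedes it below -/
import Mathlib

section
/- Let Λ be a finite nonnegative measure on (0,∞) with total mass b > 0, let θ > 0, and let Λ_θ be b times the law of min(X, Y), where X has law Λ/b and Y is an independent exponential random variable with rate θ; explicitly, Λ_θ(A) = ∫_{(0,∞)} ∫_0^∞ 1_{min(x,y) ∈ A} θ e^{−θ y} dy Λ(dx) for Borel sets A. Define ψ(λ) = λ − ∫_{(0,∞)}(1 − e^{−λu})Λ(du) and ψ_θ(λ) = λ − ∫_{(0,∞)}(1 − e^{−λu})Λ_θ(du). Then for every λ > 0, ψ_θ(λ) = λ ψ(λ + θ)/(λ + θ). In particular, if r > θ and ψ(r) = 0, then ψ_θ(r − θ) = 0. -/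
open MeasureTheory Set Real

/-!
Write `Exp(θ)` (here `exponentialLaw θ`) for the exponential law of rate `θ`. The hypothesis on
`Λθ` says that `Λθ` is the image of `Λ ⊗ Exp(θ)` under `(x, y) ↦ min x y`. By Fubini,
`∫ (1 - e^{-λu}) Λθ(du)` is then the `Λ`-integral of `x ↦ E[1 - e^{-λ min(x, Y)}]`, and splitting
this expectation at `Y = x` gives `λ/(λ+θ) (1 - e^{-(λ+θ)x})`. Hence
`∫ (1 - e^{-λu}) Λθ(du) = λ/(λ+θ) ∫ (1 - e^{-(λ+θ)u}) Λ(du)`, which rearranges to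
`ψθ λ = λ ψ(λ+θ)/(λ+θ)`.
-/

lemma integral_Ioi_mul_exp_neg_mul {c : ℝ} (hc : 0 < c) (a : ℝ) :
    ∫ y in Ioi a, c * exp (-(c * y)) = exp (-(c * a)) := by
  simp_rw [← neg_mul]
  rw [integral_const_mul, integral_exp_mul_Ioi (neg_lt_zero.2 hc)]
  field_simp

lemma integrableOn_Ioi_mul_exp_neg_mul {c : ℝ} (hc : 0 < c) (a : ℝ) :
    IntegrableOn (fun y => c * exp (-(c * y))) (Ioi a) := by
  simp_rw [← neg_mul]
  exact (integrableOn_exp_mul_Ioi (neg_lt_zero.2 hc) a).const_mul c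

lemma integral_mul_exp_neg_mul_one_sub_exp (l θ x : ℝ) (hlθ : l + θ ≠ 0) :
    ∫ y in (0:ℝ)..x, θ * exp (-(θ * y)) * (1 - exp (-(l * y)))
      = (1 - exp (-(θ * x))) - θ / (l + θ) * (1 - exp (-((l + θ) * x))) := by
  have hderiv : ∀ y ∈ uIcc 0 x, HasDerivAt
      (fun y => -exp (-(θ * y)) - θ / (l + θ) * -exp (-((l + θ) * y)))
      (θ * exp (-(θ * y)) * (1 - exp (-(l * y)))) y := by
    intro y _
    refine (ProbabilityTheory.hasDerivAt_neg_exp_mul_exp.sub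
      (ProbabilityTheory.hasDerivAt_neg_exp_mul_exp.const_mul (θ / (l + θ)))).congr_deriv ?_
    rw [show -((l + θ) * y) = -(l * y) + -(θ * y) by ring, exp_add]
    field_simp
  rw [intervalIntegral.integral_eq_sub_of_hasDerivAt hderiv
    ((by fun_prop : Continuous _).intervalIntegrable _ _)]
  simp only [mul_neg, sub_neg_eq_add, mul_zero, neg_zero, exp_zero, mul_one]
  ring

lemma setIntegral_Ioi_mul_exp_neg_mul_one_sub_exp_min {θ : ℝ} (hθ : 0 < θ) (l : ℝ) {x : ℝ}
    (hx : 0 ≤ x) (hlθ : l + θ ≠ 0) :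
    ∫ y in Ioi 0, θ * exp (-(θ * y)) * (1 - exp (-(l * min x y)))
      = l / (l + θ) * (1 - exp (-((l + θ) * x))) := by
  have hbelow : EqOn (fun y => θ * exp (-(θ * y)) * (1 - exp (-(l * min x y))))
      (fun y => θ * exp (-(θ * y)) * (1 - exp (-(l * y)))) (Ioc 0 x) :=
    fun y hy => by simp only [min_eq_right hy.2]
  have habove : EqOn (fun y => θ * exp (-(θ * y)) * (1 - exp (-(l * min x y))))
      (fun y => (1 - exp (-(l * x))) * (θ * exp (-(θ * y)))) (Ioi x) :=
    fun y hy => by simp only [min_eq_left (mem_Ioi.1 hy).le]; ring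
  rw [← Ioc_union_Ioi_eq_Ioi hx, setIntegral_union (Ioc_disjoint_Ioi le_rfl) measurableSet_Ioi
      (Continuous.integrableOn_Ioc (by fun_prop))
      (IntegrableOn.congr_fun ((integrableOn_Ioi_mul_exp_neg_mul hθ x).const_mul _)
        habove.symm measurableSet_Ioi),
    setIntegral_congr_fun measurableSet_Ioc hbelow, setIntegral_congr_fun measurableSet_Ioi habove,
    ← intervalIntegral.integral_of_le hx, integral_mul_exp_neg_mul_one_sub_exp l θ x hlθ,
    integral_const_mul, integral_Ioi_mul_exp_neg_mul hθ,
    show -((l + θ) * x) = -(l * x) + -(θ * x) by ring, exp_add]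
  field_simp
  ring

noncomputable def exponentialLaw (θ : ℝ) : Measure ℝ :=
  (volume.restrict (Ioi 0)).withDensity fun y => ENNReal.ofReal (θ * exp (-(θ * y)))

namespace exponentialLaw

variable {θ : ℝ}

instance : SFinite (exponentialLaw θ) := by
  unfold exponentialLaw
  infer_instance

lemma isFiniteMeasure (hθ : 0 < θ) : IsFiniteMeasure (exponentialLaw θ) :=
  isFiniteMeasure_withDensity_ofReal (integrableOn_Ioi_mul_exp_neg_mul hθ 0).hasFiniteIntegral

lemma ae_pos : ∀ᵐ y ∂exponentialLaw θ, 0 < y :=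
  (withDensity_absolutelyContinuous _ _).ae_le (ae_restrict_mem measurableSet_Ioi)

lemma apply_preimage {f : ℝ → ℝ} (hf : Measurable f) {A : Set ℝ} (hA : MeasurableSet A) :
    exponentialLaw θ (f ⁻¹' A)
      = ∫⁻ y in Ioi 0, A.indicator (fun _ => ENNReal.ofReal (θ * exp (-(θ * y)))) (f y) := by
  rw [exponentialLaw, withDensity_apply _ (hf hA), ← lintegral_indicator (hf hA)]
  rfl

lemma integral_eq_setIntegral (hθ : 0 ≤ θ) (g : ℝ → ℝ) :
    ∫ y, g y ∂exponentialLaw θ = ∫ y in Ioi 0, θ * exp (-(θ * y)) * g y := by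
  rw [exponentialLaw, integral_withDensity_eq_integral_toReal_smul (by fun_prop)
    (ae_of_all _ fun _ => ENNReal.ofReal_lt_top)]
  simp_rw [ENNReal.toReal_ofReal (by positivity : 0 ≤ θ * exp _), smul_eq_mul]

end exponentialLaw

lemma eq_map_prod_of_apply_eq_lintegral {α β γ : Type*} [MeasurableSpace α] [MeasurableSpace β]
    [MeasurableSpace γ] {μ : Measure α} {ν : Measure β} [SFinite ν] {ρ : Measure γ}
    {φ : α × β → γ} (hφ : Measurable φ)
    (h : ∀ A, MeasurableSet A → ρ A = ∫⁻ x, ν ((fun y => φ (x, y)) ⁻¹' A) ∂μ) :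
    ρ = (μ.prod ν).map φ := by
  ext A hA
  rw [h A hA, Measure.map_apply hφ hA, Measure.prod_apply (hφ hA)]
  rfl

lemma integral_map_min_prod_exponentialLaw {Λ : Measure ℝ} [IsFiniteMeasure Λ]
    (hΛ : ∀ᵐ x ∂Λ, 0 < x) {θ : ℝ} (hθ : 0 < θ) {l : ℝ} (hl : 0 ≤ l) :
    ∫ u, (1 - exp (-(l * u))) ∂(Λ.prod (exponentialLaw θ)).map (fun p => min p.1 p.2)
      = l / (l + θ) * ∫ x, (1 - exp (-((l + θ) * x))) ∂Λ := by
  have := exponentialLaw.isFiniteMeasure hθ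
  have hpos : ∀ᵐ p ∂Λ.prod (exponentialLaw θ), 0 < min p.1 p.2 := by
    filter_upwards [Measure.quasiMeasurePreserving_fst.ae hΛ,
      Measure.quasiMeasurePreserving_snd.ae exponentialLaw.ae_pos] with p hx hy
    exact lt_min hx hy
  have hint : Integrable (fun p : ℝ × ℝ => 1 - exp (-(l * min p.1 p.2)))
      (Λ.prod (exponentialLaw θ)) := by
    refine (integrable_const 1).mono' (by fun_prop) (hpos.mono fun p hp => ?_)
    have : exp (-(l * min p.1 p.2)) ≤ 1 := exp_le_one_iff.2 (by nlinarith)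
    rw [Real.norm_of_nonneg (by linarith)]
    linarith [exp_pos (-(l * min p.1 p.2))]
  rw [integral_map (by fun_prop) (by fun_prop), integral_prod _ hint, ← integral_const_mul]
  refine integral_congr_ae (hΛ.mono fun x hx => ?_)
  dsimp only
  rw [exponentialLaw.integral_eq_setIntegral hθ.le,
    setIntegral_Ioi_mul_exp_neg_mul_one_sub_exp_min hθ l hx.le (by positivity)]

theorem clonal_psi_model_II_general
    (θ : ℝ) (hθ : 0 < θ)
    (Λ Λθ : Measure ℝ) [IsFiniteMeasure Λ]
    (hΛsupp : Λ (Ioi 0)ᶜ = 0)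
    (hΛθ : ∀ A : Set ℝ, MeasurableSet A →
      Λθ A = ∫⁻ x, (∫⁻ y in Ioi (0:ℝ),
        A.indicator (fun _ => ENNReal.ofReal (θ * Real.exp (-(θ * y)))) (min x y)) ∂Λ)
    (ψ ψθ : ℝ → ℝ)
    (hψ : ∀ l : ℝ, ψ l = l - ∫ u, (1 - Real.exp (-(l * u))) ∂Λ)
    (hψθ : ∀ l : ℝ, ψθ l = l - ∫ u, (1 - Real.exp (-(l * u))) ∂Λθ) :
    (∀ l : ℝ, 0 < l → ψθ l = l * ψ (l + θ) / (l + θ)) ∧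
    (∀ r : ℝ, θ < r → ψ r = 0 → ψθ (r - θ) = 0) := by
  have hΛθ_eq : Λθ = (Λ.prod (exponentialLaw θ)).map (fun p => min p.1 p.2) :=
    eq_map_prod_of_apply_eq_lintegral (by fun_prop) fun A hA => by
      rw [hΛθ A hA]
      congr with x
      exact (exponentialLaw.apply_preimage (by fun_prop) hA).symm
  have hψθ_eq : ∀ l : ℝ, 0 < l → ψθ l = l * ψ (l + θ) / (l + θ) := by
    intro l hl
    rw [hψθ, hψ, hΛθ_eq, integral_map_min_prod_exponentialLaw (mem_ae_iff.2 hΛsupp) hθ hl.le]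
    field_simp
  refine ⟨hψθ_eq, fun r hr hψr => ?_⟩
  rw [hψθ_eq (r - θ) (sub_pos.2 hr), sub_add_cancel, hψr, mul_zero, zero_div]

theorem clonal_psi_model_II
    (b θ : ℝ) (hb : 0 < b) (hθ : 0 < θ)
    (Λ Λθ : Measure ℝ) [IsFiniteMeasure Λ]
    (hΛsupp : Λ (Ioi 0)ᶜ = 0) (hΛmass : Λ univ = ENNReal.ofReal b)
    (hΛθ : ∀ A : Set ℝ, MeasurableSet A →
      Λθ A = ∫⁻ x, (∫⁻ y in Ioi (0:ℝ),
        A.indicator (fun _ => ENNReal.ofReal (θ * Real.exp (-(θ * y)))) (min x y)) ∂Λ)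
    (ψ ψθ : ℝ → ℝ)
    (hψ : ∀ l : ℝ, ψ l = l - ∫ u, (1 - Real.exp (-(l * u))) ∂Λ)
    (hψθ : ∀ l : ℝ, ψθ l = l - ∫ u, (1 - Real.exp (-(l * u))) ∂Λθ) :
    (∀ l : ℝ, 0 < l → ψθ l = l * ψ (l + θ) / (l + θ)) ∧
    (∀ r : ℝ, θ < r → ψ r = 0 → ψθ (r - θ) = 0) :=
  clonal_psi_model_II_general θ hθ Λ Λθ hΛsupp hΛθ ψ ψθ hψ hψθ
end

section
/- Let r ≥ 0, let ψ : (r, ∞) → (0, ∞) be a function, and let W : [0,∞) → [1,∞) be nondecreasing and continuously differentiable with W(0) = 1 and ∫_0^∞ W(x) e^{−λ x} dx = 1/ψ(λ) for every λ > r. Let θ > 0 and define W_θ(x) = 1 + ∫_0^x e^{−θ u} W'(u) du and ψ_θ(λ) = λ ψ(λ + θ)/(λ + θ). Then for every λ > max(r − θ, 0), ∫_0^∞ W_θ(x) e^{−λ x} dx = 1/ψ_θ(λ). -/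
/-!
Since `W` is nondecreasing, `W' ≥ 0` and `W x = 1 + ∫₀ˣ W'`; likewise `W_θ` is `1` plus the
primitive of `g u = e^{-θu} W'(u) ≥ 0`. For a nonnegative `g`, Tonelli gives
`L[∫₀^· g](λ) = L[g](λ) / λ`, finiteness included, so no growth estimate is needed.
Applied to `W'` this turns the hypothesis into `L[W'](μ) = μ / ψ(μ) - 1` for `μ > r`;
since `L[g](λ) = L[W'](λ + θ)`, applied to `g` it gives
`L[W_θ](λ) = (1 + L[W'](λ + θ)) / λ = (λ + θ) / (λ ψ(λ + θ))`.
-/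

open MeasureTheory Set Filter Real

lemma lintegral_Ici_exp_neg_mul {l : ℝ} (hl : 0 < l) (u : ℝ) :
    ∫⁻ x in Ici u, ENNReal.ofReal (exp (-(l * x))) = ENNReal.ofReal (exp (-(l * u)) / l) := by
  have hint : IntegrableOn (fun x => exp (-(l * x))) (Ioi u) := by
    simpa only [neg_mul] using integrableOn_exp_mul_Ioi (neg_lt_zero.2 hl) u
  rw [Measure.restrict_congr_set Ioi_ae_eq_Ici.symm, ← ofReal_integral_eq_lintegral_ofReal hint
    (Eventually.of_forall fun x => (exp_pos _).le)]
  congr 1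
  simpa only [neg_mul, neg_div_neg_eq] using integral_exp_mul_Ioi (neg_lt_zero.2 hl) u

lemma integral_exp_neg_mul_Ioi_zero {l : ℝ} (hl : 0 < l) :
    ∫ x in Ioi (0 : ℝ), exp (-(l * x)) = l⁻¹ := by
  simpa only [neg_mul, mul_zero, exp_zero, neg_div_neg_eq, one_div] using
    integral_exp_mul_Ioi (neg_lt_zero.2 hl) 0

section PrimitiveLaplace

variable {g : ℝ → ℝ}

lemma intervalIntegral_nonneg_of_nonneg_Ioi (hg_nonneg : ∀ u ∈ Ioi (0 : ℝ), 0 ≤ g u)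
    {x : ℝ} (hx : 0 ≤ x) : 0 ≤ ∫ u in 0..x, g u := by
  rw [intervalIntegral.integral_of_le hx]
  exact setIntegral_nonneg measurableSet_Ioc fun u hu => hg_nonneg u hu.1

lemma ofReal_intervalIntegral_eq_lintegral_Ioc (hg_nonneg : ∀ u ∈ Ioi (0 : ℝ), 0 ≤ g u)
    (hg_int : ∀ x, IntegrableOn g (Ioc 0 x)) {x : ℝ} (hx : 0 ≤ x) :
    ENNReal.ofReal (∫ u in 0..x, g u) = ∫⁻ u in Ioc 0 x, ENNReal.ofReal (g u) := by
  rw [intervalIntegral.integral_of_le hx]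
  exact ofReal_integral_eq_lintegral_ofReal (hg_int x)
    ((ae_restrict_iff' measurableSet_Ioc).2 (Eventually.of_forall fun u hu => hg_nonneg u hu.1))

lemma lintegral_primitive_mul_exp (hg_nonneg : ∀ u ∈ Ioi (0 : ℝ), 0 ≤ g u)
    (hg_int : ∀ x, IntegrableOn g (Ioc 0 x)) {l : ℝ} (hl : 0 < l) :
    ∫⁻ x in Ioi 0, ENNReal.ofReal ((∫ u in 0..x, g u) * exp (-(l * x))) =
      ENNReal.ofReal l⁻¹ * ∫⁻ u in Ioi 0, ENNReal.ofReal (g u * exp (-(l * u))) := by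
  set F : ℝ → ℝ → ENNReal := fun x u => {p : ℝ × ℝ | p.2 ≤ p.1}.indicator
    (fun p => ENNReal.ofReal (g p.2) * ENNReal.ofReal (exp (-(l * p.1)))) (x, u)
  have hF : AEMeasurable (Function.uncurry F)
      ((volume.restrict (Ioi 0)).prod (volume.restrict (Ioi 0))) := by
    have hg : AEMeasurable g (volume.restrict (Ioi 0)) :=
      aemeasurable_Ioi_of_forall_Ioc fun t _ => (hg_int t).aemeasurable
    refine AEMeasurable.indicator ?_ (measurableSet_le measurable_snd measurable_fst)
    exact hg.ennreal_ofReal.comp_snd.mul (by fun_prop)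
  have hF_fst : ∀ x ∈ Ioi (0 : ℝ),
      ENNReal.ofReal ((∫ u in 0..x, g u) * exp (-(l * x))) = ∫⁻ u in Ioi 0, F x u := by
    intro x hx
    have hind : (fun u => F x u) =
        (Iic x).indicator fun u => ENNReal.ofReal (g u) * ENNReal.ofReal (exp (-(l * x))) := by
      ext u; simp [F, indicator]
    rw [ENNReal.ofReal_mul' (exp_pos _).le,
      ofReal_intervalIntegral_eq_lintegral_Ioc hg_nonneg hg_int (le_of_lt hx), hind,
      lintegral_indicator measurableSet_Iic, Measure.restrict_restrict measurableSet_Iic,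
      Iic_inter_Ioi, lintegral_mul_const' _ _ ENNReal.ofReal_ne_top]
  have hF_snd : ∀ u ∈ Ioi (0 : ℝ),
      ∫⁻ x in Ioi 0, F x u = ENNReal.ofReal l⁻¹ * ENNReal.ofReal (g u * exp (-(l * u))) := by
    intro u hu
    have hind : (fun x => F x u) =
        (Ici u).indicator fun x => ENNReal.ofReal (g u) * ENNReal.ofReal (exp (-(l * x))) := by
      ext x; simp [F, indicator]
    rw [hind, lintegral_indicator measurableSet_Ici, Measure.restrict_restrict measurableSet_Ici,
      inter_eq_left.2 (Ici_subset_Ioi.2 hu), lintegral_const_mul' _ _ ENNReal.ofReal_ne_top,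
      lintegral_Ici_exp_neg_mul hl, ← ENNReal.ofReal_mul (hg_nonneg u hu),
      ← ENNReal.ofReal_mul (by positivity)]
    congr 1
    ring
  rw [setLIntegral_congr_fun measurableSet_Ioi hF_fst, lintegral_lintegral_swap hF,
    setLIntegral_congr_fun measurableSet_Ioi hF_snd,
    lintegral_const_mul' _ _ ENNReal.ofReal_ne_top]

lemma aestronglyMeasurable_primitive_mul_exp (hg_int : ∀ x, IntegrableOn g (Ioc 0 x)) (l : ℝ) :
    AEStronglyMeasurable (fun x => (∫ u in 0..x, g u) * exp (-(l * x)))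
      (volume.restrict (Ioi 0)) := by
  refine (aemeasurable_Ioi_of_forall_Ioc fun t ht => ?_).aestronglyMeasurable
  have hcont : ContinuousOn (fun x => ∫ u in 0..x, g u) (Icc 0 t) := by
    have := intervalIntegral.continuousOn_primitive_interval
      (a := 0) (b := t) (μ := volume) (f := g)
    rw [uIcc_of_le ht.le] at this
    exact this ((integrableOn_Icc_iff_integrableOn_Ioc).2 (hg_int t))
  exact ((hcont.mono Ioc_subset_Icc_self).mul (by fun_prop)).aemeasurable measurableSet_Ioc

lemma aestronglyMeasurable_mul_exp (hg_int : ∀ x, IntegrableOn g (Ioc 0 x)) (l : ℝ) :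
    AEStronglyMeasurable (fun u => g u * exp (-(l * u))) (volume.restrict (Ioi 0)) :=
  ((aemeasurable_Ioi_of_forall_Ioc fun t _ => (hg_int t).aemeasurable).mul
    (by fun_prop)).aestronglyMeasurable

lemma integral_primitive_mul_exp (hg_nonneg : ∀ u ∈ Ioi (0 : ℝ), 0 ≤ g u)
    (hg_int : ∀ x, IntegrableOn g (Ioc 0 x)) {l : ℝ} (hl : 0 < l) :
    ∫ x in Ioi 0, (∫ u in 0..x, g u) * exp (-(l * x)) =
      l⁻¹ * ∫ u in Ioi 0, g u * exp (-(l * u)) := by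
  rw [integral_eq_lintegral_of_nonneg_ae _ (aestronglyMeasurable_primitive_mul_exp hg_int l),
    integral_eq_lintegral_of_nonneg_ae _ (aestronglyMeasurable_mul_exp hg_int l),
    lintegral_primitive_mul_exp hg_nonneg hg_int hl, ENNReal.toReal_mul,
    ENNReal.toReal_ofReal (inv_nonneg.2 hl.le)]
  all_goals filter_upwards [ae_restrict_mem measurableSet_Ioi] with u (hu : 0 < u)
  · exact mul_nonneg (hg_nonneg u hu) (exp_pos _).le
  · exact mul_nonneg (intervalIntegral_nonneg_of_nonneg_Ioi hg_nonneg hu.le) (exp_pos _).le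

lemma integrableOn_primitive_mul_exp_iff (hg_nonneg : ∀ u ∈ Ioi (0 : ℝ), 0 ≤ g u)
    (hg_int : ∀ x, IntegrableOn g (Ioc 0 x)) {l : ℝ} (hl : 0 < l) :
    IntegrableOn (fun x => (∫ u in 0..x, g u) * exp (-(l * x))) (Ioi 0) ↔
      IntegrableOn (fun u => g u * exp (-(l * u))) (Ioi 0) := by
  rw [IntegrableOn, IntegrableOn,
    ← lintegral_ofReal_ne_top_iff_integrable (aestronglyMeasurable_primitive_mul_exp hg_int l),
    ← lintegral_ofReal_ne_top_iff_integrable (aestronglyMeasurable_mul_exp hg_int l),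
    lintegral_primitive_mul_exp hg_nonneg hg_int hl, Ne, ENNReal.mul_eq_top]
  · simp [hl]
  all_goals filter_upwards [ae_restrict_mem measurableSet_Ioi] with u (hu : 0 < u)
  · exact mul_nonneg (hg_nonneg u hu) (exp_pos _).le
  · exact mul_nonneg (intervalIntegral_nonneg_of_nonneg_Ioi hg_nonneg hu.le) (exp_pos _).le

end PrimitiveLaplace

section MonotoneOnIci

variable {W W' : ℝ → ℝ} (hWmono : MonotoneOn W (Ici 0))
  (hWderiv : ∀ x ∈ Ici (0 : ℝ), HasDerivWithinAt W (W' x) (Ici 0) x)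
include hWmono hWderiv

lemma deriv_nonneg_of_monotoneOn_Ici {u : ℝ} (hu : 0 ≤ u) : 0 ≤ W' u := by
  have hacc : AccPt u (𝓟 (Ici u)) := accPt_principal_iff_nhdsWithin.2
    ((nhdsGT_neBot u).mono (nhdsWithin_mono _ fun y (hy : u < y) => ⟨hy.le, hy.ne'⟩))
  exact ((hWderiv u hu).mono (Ici_subset_Ici.2 hu)).nonneg_of_monotoneOn hacc
    (hWmono.mono (Ici_subset_Ici.2 hu))

lemma integrableOn_Ioc_deriv_of_monotoneOn_Ici (x : ℝ) : IntegrableOn W' (Ioc 0 x) :=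
  intervalIntegral.integrableOn_deriv_of_nonneg
    (fun y hy => ((hWderiv y hy.1).continuousWithinAt).mono Icc_subset_Ici_self)
    (fun y hy => (hWderiv y hy.1.le).hasDerivAt (Ici_mem_nhds hy.1))
    (fun _ hy => deriv_nonneg_of_monotoneOn_Ici hWmono hWderiv hy.1.le)

lemma eq_add_intervalIntegral_deriv_of_monotoneOn_Ici {x : ℝ} (hx : 0 ≤ x) :
    W x = W 0 + ∫ u in 0..x, W' u := by
  rw [intervalIntegral.integral_eq_sub_of_hasDerivAt_of_le hx
    (fun y hy => ((hWderiv y hy.1).continuousWithinAt).mono Icc_subset_Ici_self)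
    (fun y hy => (hWderiv y hy.1.le).hasDerivAt (Ici_mem_nhds hy.1))
    ((intervalIntegrable_iff_integrableOn_Ioc_of_le hx).2
      (integrableOn_Ioc_deriv_of_monotoneOn_Ici hWmono hWderiv x))]
  ring

lemma integrableOn_deriv_mul_exp_and_integral_eq {μ : ℝ} (hμ : 0 < μ)
    (hW : IntegrableOn (fun x => W x * exp (-(μ * x))) (Ioi 0)) :
    IntegrableOn (fun u => W' u * exp (-(μ * u))) (Ioi 0) ∧
      ∫ u in Ioi 0, W' u * exp (-(μ * u)) =
        μ * (∫ x in Ioi 0, W x * exp (-(μ * x))) - W 0 := by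
  have hW'_nonneg : ∀ u ∈ Ioi (0 : ℝ), 0 ≤ W' u :=
    fun u hu => deriv_nonneg_of_monotoneOn_Ici hWmono hWderiv (le_of_lt hu)
  have hW'_int := integrableOn_Ioc_deriv_of_monotoneOn_Ici hWmono hWderiv
  have hexp : IntegrableOn (fun x => exp (-(μ * x))) (Ioi 0) := by
    simpa only [neg_mul] using exp_neg_integrableOn_Ioi 0 hμ
  have hsplit : EqOn (fun x => W x * exp (-(μ * x)))
      (fun x => W 0 * exp (-(μ * x)) + (∫ u in 0..x, W' u) * exp (-(μ * x))) (Ioi 0) := by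
    intro x hx
    dsimp only
    rw [eq_add_intervalIntegral_deriv_of_monotoneOn_Ici hWmono hWderiv (le_of_lt hx), add_mul]
  have hprim : IntegrableOn (fun x => (∫ u in 0..x, W' u) * exp (-(μ * x))) (Ioi 0) :=
    (hW.sub (hexp.const_mul (W 0))).congr_fun
      (fun x hx => by simp only [Pi.sub_apply, hsplit hx]; ring) measurableSet_Ioi
  have hW_eq : ∫ x in Ioi 0, W x * exp (-(μ * x)) =
      W 0 * μ⁻¹ + μ⁻¹ * ∫ u in Ioi 0, W' u * exp (-(μ * u)) := by
    rw [setIntegral_congr_fun measurableSet_Ioi hsplit, integral_add (hexp.const_mul (W 0)) hprim,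
      integral_const_mul, integral_exp_neg_mul_Ioi_zero hμ,
      integral_primitive_mul_exp hW'_nonneg hW'_int hμ]
  refine ⟨(integrableOn_primitive_mul_exp_iff hW'_nonneg hW'_int hμ).1 hprim, ?_⟩
  rw [hW_eq]
  field_simp
  ring

end MonotoneOnIci

theorem laplace_transform_of_clonal_scale_function_model_II_general
    (r : ℝ) (ψ : ℝ → ℝ) (hψpos : ∀ l : ℝ, r < l → 0 < ψ l)
    (W W' : ℝ → ℝ)
    (hWmono : MonotoneOn W (Ici 0))
    (hWderiv : ∀ x ∈ Ici (0:ℝ), HasDerivWithinAt W (W' x) (Ici 0) x)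
    (hW0 : W 0 = 1)
    (hLaplace : ∀ l : ℝ, r < l →
      (∫ x in Ioi (0:ℝ), W x * Real.exp (-(l * x))) = 1 / ψ l)
    (θ : ℝ) (hθ : 0 < θ)
    (Wθ : ℝ → ℝ)
    (hWθ : ∀ x : ℝ, Wθ x = 1 + ∫ u in (0:ℝ)..x, Real.exp (-(θ * u)) * W' u)
    (ψθ : ℝ → ℝ)
    (hψθ : ∀ l : ℝ, ψθ l = l * ψ (l + θ) / (l + θ)) :
    ∀ l : ℝ, max (r - θ) 0 < l →
      (∫ x in Ioi (0:ℝ), Wθ x * Real.exp (-(l * x))) = 1 / ψθ l := by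
  intro l hl
  have hl0 : 0 < l := (le_max_right _ _).trans_lt hl
  have hμ : r < l + θ := by linarith [(le_max_left _ _).trans_lt hl]
  have hψ : 0 < ψ (l + θ) := hψpos _ hμ
  have hW : IntegrableOn (fun x => W x * exp (-((l + θ) * x))) (Ioi 0) :=
    Integrable.of_integral_ne_zero (by rw [hLaplace _ hμ]; positivity)
  obtain ⟨hW'_exp, hW'_eq⟩ :=
    integrableOn_deriv_mul_exp_and_integral_eq hWmono hWderiv (add_pos hl0 hθ) hW
  set g : ℝ → ℝ := fun u => exp (-(θ * u)) * W' u
  have hg_exp : (fun u => g u * exp (-(l * u))) = fun u => W' u * exp (-((l + θ) * u)) := by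
    ext u
    rw [mul_right_comm, ← exp_add]
    ring_nf
  have hg_nonneg : ∀ u ∈ Ioi (0 : ℝ), 0 ≤ g u := fun u hu =>
    mul_nonneg (exp_pos _).le (deriv_nonneg_of_monotoneOn_Ici hWmono hWderiv (le_of_lt hu))
  have hg_int : ∀ x, IntegrableOn g (Ioc 0 x) := fun x =>
    (((integrableOn_Icc_iff_integrableOn_Ioc).2
      (integrableOn_Ioc_deriv_of_monotoneOn_Ici hWmono hWderiv x)).continuousOn_mul
      (by fun_prop) isCompact_Icc).mono_set Ioc_subset_Icc_self
  have hprim : IntegrableOn (fun x => (∫ u in 0..x, g u) * exp (-(l * x))) (Ioi 0) :=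
    (integrableOn_primitive_mul_exp_iff hg_nonneg hg_int hl0).2 (hg_exp ▸ hW'_exp)
  have hexp : IntegrableOn (fun x => exp (-(l * x))) (Ioi 0) := by
    simpa only [neg_mul] using exp_neg_integrableOn_Ioi 0 hl0
  calc ∫ x in Ioi 0, Wθ x * exp (-(l * x))
      = ∫ x in Ioi 0, (exp (-(l * x)) + (∫ u in 0..x, g u) * exp (-(l * x))) := by
        simp only [hWθ, add_mul, one_mul, g]
    _ = l⁻¹ + l⁻¹ * ((l + θ) * (1 / ψ (l + θ)) - 1) := by
        rw [integral_add hexp hprim, integral_exp_neg_mul_Ioi_zero hl0,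
          integral_primitive_mul_exp hg_nonneg hg_int hl0, hg_exp, hW'_eq, hLaplace _ hμ, hW0]
    _ = 1 / ψθ l := by
        rw [hψθ]
        field_simp
        ring

theorem laplace_transform_of_clonal_scale_function_model_II
    (r : ℝ) (hr : 0 ≤ r) (ψ : ℝ → ℝ) (hψpos : ∀ l : ℝ, r < l → 0 < ψ l)
    (W W' : ℝ → ℝ)
    (hW1 : ∀ x ∈ Ici (0:ℝ), 1 ≤ W x)
    (hWmono : MonotoneOn W (Ici 0))
    (hWderiv : ∀ x ∈ Ici (0:ℝ), HasDerivWithinAt W (W' x) (Ici 0) x)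
    (hW'cont : ContinuousOn W' (Ici 0))
    (hW0 : W 0 = 1)
    (hLaplace : ∀ l : ℝ, r < l →
      (∫ x in Ioi (0:ℝ), W x * Real.exp (-(l * x))) = 1 / ψ l)
    (θ : ℝ) (hθ : 0 < θ)
    (Wθ : ℝ → ℝ)
    (hWθ : ∀ x : ℝ, Wθ x = 1 + ∫ u in (0:ℝ)..x, Real.exp (-(θ * u)) * W' u)
    (ψθ : ℝ → ℝ)
    (hψθ : ∀ l : ℝ, ψθ l = l * ψ (l + θ) / (l + θ)) :
    ∀ l : ℝ, max (r - θ) 0 < l →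
      (∫ x in Ioi (0:ℝ), Wθ x * Real.exp (-(l * x))) = 1 / ψθ l :=
  laplace_transform_of_clonal_scale_function_model_II_general r ψ hψpos W W' hWmono hWderiv hW0
    hLaplace θ hθ Wθ hWθ ψθ hψθ
end

section
/- Let b⋆ > d⋆ ≥ 0, set r⋆ = b⋆ − d⋆ > 0 and W⋆(t) = (b⋆ e^{r⋆ t} − d⋆)/r⋆, and let r > r⋆. Set ν = r/r⋆, μ = b⋆/r⋆ and γ = (r − r⋆)/b⋆. Then lim_{j→∞} j^ν · (r − r⋆) ∫_0^∞ (1 − 1/W⋆(t))^{j−1} e^{−(r−r⋆)t} / W⋆(t) dt = γ Γ(ν) μ^ν, where the limit is over integers j → ∞ and Γ is the Gamma function. -/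
/-!
The substitution `s = 1 - 1 / W⋆(t)` maps `(0, ∞)` onto `(0, 1)`, and since
`b⋆ - d⋆ s = b⋆ e^{r⋆ t} / W⋆(t)` it turns the integral into
`b⋆^(ν-1) ∫₀¹ s^(j-1) (1-s)^(ν-1) g(s) ds` with `g(s) = (b⋆ - d⋆ s)^(-ν)`.
By Euler's limit formula for `Γ`, the beta kernel `j^ν s^(j-1) (1-s)^(ν-1)` has mass tending to
`Γ(ν)`; as `g` is Lipschitz on `[0, 1]`, replacing `g(s)` by `g(1) = r⋆^(-ν)` costs an extra
factor `1 - s` in the kernel, which makes the error `O(1/j)`.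
-/

open MeasureTheory Set Filter Topology NNReal
open scoped Nat

lemma integral_pow_mul_one_sub_rpow {a : ℝ} (ha : 0 < a) (n : ℕ) :
    ∫ s in (0:ℝ)..1, s ^ n * (1 - s) ^ (a - 1) = n ! / ∏ k ∈ Finset.range (n + 1), (a + k) := by
  have hbeta : Complex.betaIntegral (n + 1) a = ↑(∫ s in (0:ℝ)..1, s ^ n * (1 - s) ^ (a - 1)) := by
    rw [Complex.betaIntegral, ← intervalIntegral.integral_ofReal]
    refine intervalIntegral.integral_congr fun s hs => ?_
    rw [uIcc_of_le zero_le_one] at hs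
    have h1s : 0 ≤ 1 - s := sub_nonneg.2 hs.2
    push_cast
    rw [add_sub_cancel_right, Complex.cpow_natCast, Complex.ofReal_cpow h1s]
    push_cast
    ring_nf
  rw [← Complex.betaIntegral_symm, Complex.betaIntegral_eval_nat_add_one_right (by simpa)] at hbeta
  exact_mod_cast hbeta.symm

lemma tendsto_rpow_mul_integral_pow_mul_one_sub_rpow {a : ℝ} (ha : 0 < a) :
    Tendsto (fun n : ℕ => ((n : ℝ) + 1) ^ a * ∫ s in (0:ℝ)..1, s ^ n * (1 - s) ^ (a - 1))
      atTop (𝓝 (Real.Gamma a)) := by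
  have hratio : Tendsto (fun n : ℕ => (1 + (n : ℝ)⁻¹) ^ a) atTop (𝓝 1) := by
    simpa using ((tendsto_inv_atTop_zero.comp tendsto_natCast_atTop_atTop).const_add
      (1 : ℝ)).rpow_const (p := a) (Or.inr ha.le)
  have hlim := hratio.mul (Real.GammaSeq_tendsto_Gamma a)
  rw [one_mul] at hlim
  refine hlim.congr' ?_
  filter_upwards [eventually_gt_atTop 0] with n hn
  have hn : (0 : ℝ) < n := Nat.cast_pos.2 hn
  rw [integral_pow_mul_one_sub_rpow ha, Real.GammaSeq, ← mul_div_assoc, ← mul_div_assoc,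
    ← mul_assoc, ← Real.mul_rpow (by positivity) hn.le, add_mul, inv_mul_cancel₀ hn.ne', one_mul]

lemma abs_integral_pow_mul_one_sub_rpow_mul_sub_le {a : ℝ} (ha : 0 < a) {g : ℝ → ℝ} {K : ℝ≥0}
    (hg : LipschitzOnWith K g (Icc 0 1)) (n : ℕ) :
    |(∫ s in (0:ℝ)..1, s ^ n * (1 - s) ^ (a - 1) * g s)
        - g 1 * ∫ s in (0:ℝ)..1, s ^ n * (1 - s) ^ (a - 1)|
      ≤ K * ∫ s in (0:ℝ)..1, s ^ n * (1 - s) ^ a := by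
  have hkernel : IntervalIntegrable (fun s : ℝ => (1 - s) ^ (a - 1)) volume 0 1 := by
    simpa using (intervalIntegral.intervalIntegrable_rpow' (a := 1) (b := 0) (r := a - 1)
      (by linarith)).comp_sub_left 1
  have hint : ∀ {f : ℝ → ℝ}, ContinuousOn f (Icc 0 1) →
      IntervalIntegrable (fun s => s ^ n * (1 - s) ^ (a - 1) * f s) volume 0 1 := fun hf => by
    convert hkernel.mul_continuousOn (((continuous_pow n).continuousOn).mul
      (by rwa [uIcc_of_le zero_le_one])) using 1
    ext s; simp only [Pi.mul_apply]; ring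
  have hpoint : ∀ s ∈ Icc (0:ℝ) 1,
      |s ^ n * (1 - s) ^ (a - 1) * (g s - g 1)| ≤ K * (s ^ n * (1 - s) ^ a) := fun s hs => by
    have hs0 : 0 ≤ s := hs.1
    have h1s : 0 ≤ 1 - s := sub_nonneg.2 hs.2
    have hlip : |g s - g 1| ≤ K * (1 - s) := by
      simpa [Real.dist_eq, abs_of_nonneg h1s, abs_sub_comm s] using
        hg.dist_le_mul s hs 1 ⟨zero_le_one, le_rfl⟩
    calc |s ^ n * (1 - s) ^ (a - 1) * (g s - g 1)|
        = s ^ n * (1 - s) ^ (a - 1) * |g s - g 1| := by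
          rw [abs_mul, abs_of_nonneg (by positivity)]
      _ ≤ s ^ n * (1 - s) ^ (a - 1) * (K * (1 - s)) := by gcongr
      _ = K * (s ^ n * (1 - s) ^ a) := by
          rw [show a = (a - 1) + 1 by ring, Real.rpow_add' h1s (by linarith), Real.rpow_one]
          ring_nf
  calc _ = |∫ s in (0:ℝ)..1, s ^ n * (1 - s) ^ (a - 1) * (g s - g 1)| := by
        rw [mul_comm (g 1), ← intervalIntegral.integral_mul_const,
          ← intervalIntegral.integral_sub (hint hg.continuousOn) (hint continuousOn_const)]
        simp only [mul_sub]
    _ ≤ ∫ s in (0:ℝ)..1, |s ^ n * (1 - s) ^ (a - 1) * (g s - g 1)| :=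
        intervalIntegral.abs_integral_le_integral_abs zero_le_one
    _ ≤ ∫ s in (0:ℝ)..1, K * (s ^ n * (1 - s) ^ a) :=
        intervalIntegral.integral_mono_on zero_le_one
          (hint (hg.continuousOn.sub continuousOn_const)).abs
          (Continuous.intervalIntegrable (by fun_prop (disch := exact ha.le)) _ _) hpoint
    _ = K * ∫ s in (0:ℝ)..1, s ^ n * (1 - s) ^ a := intervalIntegral.integral_const_mul _ _

lemma tendsto_rpow_mul_integral_pow_mul_one_sub_rpow_mul {a : ℝ} (ha : 0 < a) {g : ℝ → ℝ}
    {K : ℝ≥0} (hg : LipschitzOnWith K g (Icc 0 1)) :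
    Tendsto (fun n : ℕ => ((n : ℝ) + 1) ^ a * ∫ s in (0:ℝ)..1, s ^ n * (1 - s) ^ (a - 1) * g s)
      atTop (𝓝 (Real.Gamma a * g 1)) := by
  have hmain := (tendsto_rpow_mul_integral_pow_mul_one_sub_rpow ha).const_mul (g 1)
  have hmoment : Tendsto (fun n : ℕ => ((n : ℝ) + 1) ^ a * ∫ s in (0:ℝ)..1, s ^ n * (1 - s) ^ a)
      atTop (𝓝 0) := by
    have h := (tendsto_rpow_mul_integral_pow_mul_one_sub_rpow (a := a + 1) (by linarith)).mul
      (tendsto_inv_atTop_zero.comp (tendsto_atTop_add_const_right _ 1 tendsto_natCast_atTop_atTop))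
    rw [mul_zero] at h
    refine h.congr fun n => ?_
    simp only [Function.comp_apply, add_sub_cancel_right]
    rw [Real.rpow_add_one (by positivity)]
    field_simp
  have herror : Tendsto (fun n : ℕ => ((n : ℝ) + 1) ^ a *
      ((∫ s in (0:ℝ)..1, s ^ n * (1 - s) ^ (a - 1) * g s)
        - g 1 * ∫ s in (0:ℝ)..1, s ^ n * (1 - s) ^ (a - 1))) atTop (𝓝 0) := by
    refine squeeze_zero_norm (fun n => ?_)
      (by simpa using hmoment.const_mul (K : ℝ))
    rw [Real.norm_eq_abs, abs_mul, abs_of_nonneg (by positivity), mul_left_comm]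
    gcongr
    exact abs_integral_pow_mul_one_sub_rpow_mul_sub_le ha hg n
  rw [mul_comm]
  refine (zero_add (g 1 * Real.Gamma a) ▸ herror.add hmain).congr fun n => ?_
  ring

/-- `W⋆` with `r⋆ = b - d`. -/
noncomputable def cloneW (b d t : ℝ) : ℝ := (b * Real.exp ((b - d) * t) - d) / (b - d)

section cloneW

variable {b d : ℝ}

lemma hasDerivAt_cloneW (hdb : d ≠ b) (t : ℝ) :
    HasDerivAt (cloneW b d) (b * Real.exp ((b - d) * t)) t := by
  have h := ((((hasDerivAt_id' t).const_mul (b - d)).exp.const_mul b).sub_const d).div_const (b - d)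
  refine h.congr_deriv ?_
  field_simp [sub_ne_zero.2 hdb.symm]

lemma strictMono_cloneW (hb : 0 < b) (hdb : d < b) : StrictMono (cloneW b d) := fun s t hst => by
  have hρ : 0 < b - d := sub_pos.2 hdb
  unfold cloneW
  gcongr

lemma cloneW_zero (hdb : d ≠ b) : cloneW b d 0 = 1 := by
  simp [cloneW, sub_ne_zero.2 hdb.symm]

lemma one_lt_cloneW (hb : 0 < b) (hdb : d < b) {t : ℝ} (ht : 0 < t) : 1 < cloneW b d t :=
  cloneW_zero hdb.ne ▸ strictMono_cloneW hb hdb ht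

lemma exists_cloneW_eq (hb : 0 < b) (hdb : d < b) {x : ℝ} (hx : 1 < x) :
    ∃ t, 0 < t ∧ cloneW b d t = x := by
  have hρ : 0 < b - d := sub_pos.2 hdb
  have hy : 1 < ((b - d) * x + d) / b := by
    rw [one_lt_div hb]; nlinarith
  refine ⟨Real.log (((b - d) * x + d) / b) / (b - d), div_pos (Real.log_pos hy) hρ, ?_⟩
  rw [cloneW, mul_div_cancel₀ _ hρ.ne', Real.exp_log (by linarith), mul_div_cancel₀ _ hb.ne']
  field_simp
  ring

lemma image_one_sub_one_div_cloneW_Ioi (hb : 0 < b) (hdb : d < b) :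
    (fun t => 1 - 1 / cloneW b d t) '' Ioi 0 = Ioo 0 1 := by
  ext y
  constructor
  · rintro ⟨t, ht, rfl⟩
    have hW := one_lt_cloneW hb hdb ht
    constructor
    · simpa using (div_lt_one (by linarith)).2 hW
    · simpa using (by positivity : 0 < 1 / cloneW b d t)
  · rintro ⟨hy0, hy1⟩
    obtain ⟨t, ht, hWt⟩ := exists_cloneW_eq hb hdb (one_lt_one_div (sub_pos.2 hy1) (by linarith))
    exact ⟨t, ht, by simp only [hWt]; field_simp; ring⟩

lemma hasDerivAt_one_sub_one_div_cloneW (hdb : d ≠ b) {t : ℝ} (ht : cloneW b d t ≠ 0) :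
    HasDerivAt (fun t => 1 - 1 / cloneW b d t)
      (b * Real.exp ((b - d) * t) / cloneW b d t ^ 2) t := by
  refine (((hasDerivAt_const t 1).div (hasDerivAt_cloneW hdb t) ht).const_sub 1).congr_deriv ?_
  ring

lemma sub_mul_one_sub_one_div_cloneW (hdb : d ≠ b) {t : ℝ} (ht : cloneW b d t ≠ 0) :
    b - d * (1 - 1 / cloneW b d t) = b * Real.exp ((b - d) * t) / cloneW b d t := by
  have hlin : (b - d) * cloneW b d t + d = b * Real.exp ((b - d) * t) := by
    rw [cloneW, mul_div_cancel₀ _ (sub_ne_zero.2 hdb.symm), sub_add_cancel]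
  rw [eq_div_iff ht, ← hlin]
  field_simp
  ring

lemma integrand_cloneW_eq (hb : 0 < b) (hdb : d < b) (r : ℝ) (n : ℕ) {t : ℝ} (ht : 0 < t) :
    (1 - 1 / cloneW b d t) ^ n * Real.exp (-((r - (b - d)) * t)) / cloneW b d t
      = b ^ (r / (b - d) - 1) * (|b * Real.exp ((b - d) * t) / cloneW b d t ^ 2| *
        ((1 - 1 / cloneW b d t) ^ n * (1 - (1 - 1 / cloneW b d t)) ^ (r / (b - d) - 1)
          * (b - d * (1 - 1 / cloneW b d t)) ^ (-(r / (b - d))))) := by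
  have hρ : 0 < b - d := sub_pos.2 hdb
  have hWt : 0 < cloneW b d t := one_pos.trans (one_lt_cloneW hb hdb ht)
  have hbase :
      b - d * (1 - 1 / cloneW b d t) = b * Real.exp ((b - d) * t) * (1 / cloneW b d t) := by
    rw [mul_one_div]
    exact sub_mul_one_sub_one_div_cloneW hdb.ne hWt.ne'
  generalize cloneW b d t = W at hWt hbase ⊢
  set ν := r / (b - d)
  have hE : 0 < Real.exp ((b - d) * t) := Real.exp_pos _
  have hEν : Real.exp ((b - d) * t) ^ (-ν) = Real.exp (-(r * t)) := by
    rw [← Real.exp_mul]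
    congr 1
    simp only [ν]
    field_simp
  have hWν : (1 / W) ^ (ν - 1) * (1 / W) ^ (-ν) = W := by
    rw [← Real.rpow_add (by positivity), show ν - 1 + -ν = -1 by ring, Real.rpow_neg_one, one_div,
      inv_inv]
  have hbν : b ^ (ν - 1) * b * b ^ (-ν) = 1 := by
    rw [← Real.rpow_add_one hb.ne', ← Real.rpow_add hb]
    simp
  simp only [sub_sub_cancel, hbase,
    Real.mul_rpow (by positivity : 0 ≤ b * Real.exp ((b - d) * t)) (by positivity : 0 ≤ 1 / W),
    Real.mul_rpow hb.le hE.le, hEν,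
    abs_of_pos (by positivity : 0 < b * Real.exp ((b - d) * t) / W ^ 2)]
  calc _ = b ^ (ν - 1) * b * b ^ (-ν) * ((1 / W) ^ (ν - 1) * (1 / W) ^ (-ν)) * (1 - 1 / W) ^ n
        * (Real.exp ((b - d) * t) * Real.exp (-(r * t))) / W ^ 2 := by
        rw [hbν, hWν, ← Real.exp_add]
        field_simp
        ring_nf
    _ = _ := by ring

lemma integral_Ioi_cloneW (hb : 0 < b) (hdb : d < b) (r : ℝ) (n : ℕ) :
    ∫ t in Ioi 0, (1 - 1 / cloneW b d t) ^ n * Real.exp (-((r - (b - d)) * t)) / cloneW b d t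
      = b ^ (r / (b - d) - 1) *
        ∫ s in (0:ℝ)..1, s ^ n * (1 - s) ^ (r / (b - d) - 1) * (b - d * s) ^ (-(r / (b - d))) := by
  have hW : ∀ t ∈ Ioi (0:ℝ), 0 < cloneW b d t := fun t ht =>
    one_pos.trans (one_lt_cloneW hb hdb ht)
  have hinj : InjOn (fun t => 1 - 1 / cloneW b d t) (Ioi 0) := fun s _ t _ hst =>
    (strictMono_cloneW hb hdb).injective (by simpa using hst)
  rw [intervalIntegral.integral_of_le zero_le_one, integral_Ioc_eq_integral_Ioo,
    ← image_one_sub_one_div_cloneW_Ioi hb hdb,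
    integral_image_eq_integral_abs_deriv_smul measurableSet_Ioi
      (fun t ht => (hasDerivAt_one_sub_one_div_cloneW hdb.ne (hW t ht).ne').hasDerivWithinAt) hinj,
    ← integral_const_mul]
  exact setIntegral_congr_fun measurableSet_Ioi fun t ht => integrand_cloneW_eq hb hdb r n ht

end cloneW

theorem tail_asymptotics_supercritical_clonal_case
    (bs ds r : ℝ) (hd : 0 ≤ ds) (hbd : ds < bs)
    (rs : ℝ) (hrs : rs = bs - ds) (hr : rs < r)
    (Ws : ℝ → ℝ)
    (hWs : ∀ t : ℝ, Ws t = (bs * Real.exp (rs * t) - ds) / rs)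
    (ν μ γ : ℝ) (hν : ν = r / rs) (hμ : μ = bs / rs) (hγ : γ = (r - rs) / bs) :
    Tendsto
      (fun j : ℕ => (j : ℝ) ^ ν * ((r - rs) *
        ∫ t in Ioi (0:ℝ),
          (1 - 1 / Ws t) ^ (j - 1) * Real.exp (-((r - rs) * t)) / Ws t))
      atTop (nhds (γ * Real.Gamma ν * μ ^ ν)) := by
  subst hrs hν hμ hγ
  obtain rfl : Ws = cloneW bs ds := funext hWs
  have hb : 0 < bs := hd.trans_lt hbd
  have hρ : 0 < bs - ds := sub_pos.2 hbd
  have hν : 0 < r / (bs - ds) := div_pos (hρ.trans hr) hρ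
  obtain ⟨K, hG⟩ :
      ∃ K, LipschitzOnWith K (fun s => (bs - ds * s) ^ (-(r / (bs - ds)))) (Icc 0 1) := by
    refine ContDiffOn.exists_lipschitzOnWith ?_ one_ne_zero (convex_Icc 0 1) isCompact_Icc
    refine (by fun_prop : ContDiffOn ℝ 1 (fun s : ℝ => bs - ds * s) (Icc 0 1)).rpow_const_of_ne
      fun s hs => ne_of_gt ?_
    nlinarith [hs.1, hs.2]
  have hlim := (tendsto_rpow_mul_integral_pow_mul_one_sub_rpow_mul hν hG).const_mul
    ((r - (bs - ds)) * bs ^ (r / (bs - ds) - 1))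
  rw [← tendsto_add_atTop_iff_nat 1]
  convert hlim using 2 with n
  · simp only [Nat.add_sub_cancel, Nat.cast_add_one, integral_Ioi_cloneW hb hbd]
    ring
  · rw [mul_one, Real.div_rpow hb.le hρ.le, Real.rpow_neg hρ.le, Real.rpow_sub_one hb.ne']
    ring
end

section
/- Let ν > 0 and C ≥ 0, and let (a_i)_{i ≥ 1} be a nonincreasing sequence of nonnegative real numbers such that ∑_{i ≥ 1} a_i < ∞ and lim_{j→∞} j^ν ∑_{i=j}^∞ a_i = C. Then lim_{i→∞} i^{ν+1} a_i = ν C. -/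
/-!
The tail `T j = ∑' k, a (j + k)` of a nonincreasing sequence is convex with decrements `a j`,
so `a m` lies between the difference quotients `(T m - T n) / (n - m)` for `n = ⌊c m⌋₊` with
`c` slightly above and slightly below `1`. Since `m ^ ν * T n → c ^ (-ν) * C`, the quotients
multiplied by `m ^ (ν + 1)` tend to `C * (1 - c ^ (-ν)) / (c - 1)`, and this tends to `ν * C`
as `c → 1`, the derivative of `-x ^ (-ν)` at `1`.
-/

open Filter Finset Topology

noncomputable def tailSum (a : ℕ → ℝ) (j : ℕ) : ℝ := ∑' k, a (j + k)

theorem tailSum_sub_tailSum_add {a : ℕ → ℝ} (hs : Summable a) (j d : ℕ) :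
    tailSum a j - tailSum a (j + d) = ∑ i ∈ range d, a (j + i) := by
  have hj : Summable fun k ↦ a (j + k) := by
    simpa only [add_comm j] using (summable_nat_add_iff j).mpr hs
  rw [tailSum, tailSum, ← hj.sum_add_tsum_nat_add d]
  simp only [add_assoc, add_comm d, add_sub_cancel_right]

namespace Antitone

variable {a : ℕ → ℝ}

theorem tailSum_sub_tailSum_div_le (ha : Antitone a) (hs : Summable a) {j k : ℕ} (hjk : j < k) :
    (tailSum a j - tailSum a k) / ((k : ℝ) - j) ≤ a j := by
  obtain ⟨d, rfl⟩ := Nat.exists_eq_add_of_lt hjk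
  have hd : (0 : ℝ) < ((j + d + 1 : ℕ) : ℝ) - j := by push_cast; linarith
  rw [div_le_iff₀ hd, add_assoc, tailSum_sub_tailSum_add hs]
  calc ∑ i ∈ range (d + 1), a (j + i) ≤ #(range (d + 1)) • a j :=
        sum_le_card_nsmul _ _ _ fun i _ ↦ ha (Nat.le_add_right j i)
    _ = a j * (((j + d + 1 : ℕ) : ℝ) - j) := by
      simp only [card_range, nsmul_eq_mul, Nat.cast_add, Nat.cast_one]; ring

theorem le_tailSum_sub_tailSum_div (ha : Antitone a) (hs : Summable a) {j k : ℕ} (hkj : k < j) :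
    a j ≤ (tailSum a j - tailSum a k) / ((k : ℝ) - j) := by
  obtain ⟨d, rfl⟩ := Nat.exists_eq_add_of_lt hkj
  have hd : (0 : ℝ) < ((k + d + 1 : ℕ) : ℝ) - k := by push_cast; linarith
  rw [← neg_div_neg_eq, neg_sub, neg_sub, le_div_iff₀ hd, add_assoc, tailSum_sub_tailSum_add hs]
  calc a (k + (d + 1)) * (((k + (d + 1) : ℕ) : ℝ) - k)
        = #(range (d + 1)) • a (k + (d + 1)) := by
        simp only [Nat.cast_add, Nat.cast_one, add_sub_cancel_left, card_range, nsmul_eq_mul]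
        ring
    _ ≤ ∑ i ∈ range (d + 1), a (k + i) :=
        card_nsmul_le_sum _ _ _ fun i hi ↦ ha (by simp at hi; omega)

end Antitone

theorem tendsto_one_sub_rpow_neg_div_sub_one (ν : ℝ) :
    Tendsto (fun c : ℝ ↦ (1 - c ^ (-ν)) / (c - 1)) (𝓝[≠] 1) (𝓝 ν) := by
  have hd : HasDerivAt (fun x : ℝ ↦ x ^ (-ν)) (-ν) 1 := by
    simpa using Real.hasDerivAt_rpow_const (x := 1) (p := -ν) (Or.inl one_ne_zero)
  refine (neg_neg ν ▸ (hasDerivAt_iff_tendsto_slope.mp hd).neg).congr fun c ↦ ?_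
  rw [slope_def_field, Real.one_rpow, ← neg_div, neg_sub]

theorem tendsto_of_tendsto_nhdsNE_of_eventually_bounds {α : Type*} {l : Filter α}
    {u : α → ℝ} {q : ℝ → α → ℝ} {G : ℝ → ℝ} {L x₀ : ℝ} (hG : Tendsto G (𝓝[≠] x₀) (𝓝 L))
    (hq : ∀ᶠ c in 𝓝[≠] x₀, Tendsto (q c) l (𝓝 (G c)))
    (hlower : ∀ᶠ c in 𝓝[>] x₀, ∀ᶠ m in l, q c m ≤ u m)
    (hupper : ∀ᶠ c in 𝓝[<] x₀, ∀ᶠ m in l, u m ≤ q c m) :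
    Tendsto u l (𝓝 L) := by
  refine tendsto_order.mpr ⟨fun y hy ↦ ?_, fun y hy ↦ ?_⟩
  · obtain ⟨c, hyc, hqc, hc⟩ := ((hG.mono_left (nhdsGT_le_nhdsNE x₀)).eventually_const_lt hy
      |>.and ((hq.filter_mono (nhdsGT_le_nhdsNE x₀)).and hlower)).exists
    filter_upwards [hqc.eventually_const_lt hyc, hc] with m h₁ h₂
    exact h₁.trans_le h₂
  · obtain ⟨c, hyc, hqc, hc⟩ := ((hG.mono_left (nhdsLT_le_nhdsNE x₀)).eventually_lt_const hy
      |>.and ((hq.filter_mono (nhdsLT_le_nhdsNE x₀)).and hupper)).exists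
    filter_upwards [hqc.eventually_lt_const hyc, hc] with m h₁ h₂
    exact h₂.trans_lt h₁

theorem tendsto_rpow_mul_comp_of_tendsto_div {f : ℕ → ℝ} {ν C c : ℝ}
    (hf : Tendsto (fun j : ℕ ↦ (j : ℝ) ^ ν * f j) atTop (𝓝 C)) {n : ℕ → ℕ} (hc : 0 < c)
    (hn : Tendsto (fun m : ℕ ↦ (n m : ℝ) / m) atTop (𝓝 c)) :
    Tendsto (fun m : ℕ ↦ (m : ℝ) ^ ν * f (n m)) atTop (𝓝 (c ^ (-ν) * C)) := by
  have hn_top : Tendsto n atTop atTop := by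
    refine tendsto_natCast_atTop_iff.mp
      ((hn.pos_mul_atTop hc tendsto_natCast_atTop_atTop).congr' ?_)
    filter_upwards [eventually_ne_atTop 0] with m hm
    field_simp
  have hratio : Tendsto (fun m : ℕ ↦ ((m : ℝ) / n m) ^ ν) atTop (𝓝 (c ^ (-ν))) := by
    rw [Real.rpow_neg hc.le, ← Real.inv_rpow hc.le]
    have hinv : Tendsto (fun m : ℕ ↦ (m : ℝ) / n m) atTop (𝓝 c⁻¹) := by
      simpa only [inv_div] using hn.inv₀ hc.ne'
    exact hinv.rpow_const (Or.inl (inv_ne_zero hc.ne'))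
  refine (hratio.mul (hf.comp hn_top)).congr' ?_
  filter_upwards [hn_top.eventually_ne_atTop 0] with m hm
  rw [Function.comp_apply, Real.div_rpow (Nat.cast_nonneg m) (Nat.cast_nonneg _), ← mul_assoc,
    div_mul_cancel₀ _ (Real.rpow_pos_of_pos (by positivity) ν).ne']

theorem tendsto_rpow_add_one_mul_sub_div_floor {f : ℕ → ℝ} {ν C c : ℝ}
    (hf : Tendsto (fun j : ℕ ↦ (j : ℝ) ^ ν * f j) atTop (𝓝 C)) (hc : 0 < c) (hc₁ : c ≠ 1) :
    Tendsto (fun m : ℕ ↦ (m : ℝ) ^ (ν + 1) * ((f m - f ⌊c * m⌋₊) / ((⌊c * m⌋₊ : ℝ) - m)))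
      atTop (𝓝 (C * ((1 - c ^ (-ν)) / (c - 1)))) := by
  have hfloor : Tendsto (fun m : ℕ ↦ (⌊c * m⌋₊ : ℝ) / m) atTop (𝓝 c) :=
    (tendsto_nat_floor_mul_div_atTop hc.le).comp tendsto_natCast_atTop_atTop
  have hquot := (hf.sub (tendsto_rpow_mul_comp_of_tendsto_div hf hc hfloor)).div
    (hfloor.sub_const 1) (sub_ne_zero.mpr hc₁)
  rw [show C * ((1 - c ^ (-ν)) / (c - 1)) = (C - c ^ (-ν) * C) / (c - 1) by ring]
  refine hquot.congr' ?_
  filter_upwards [eventually_ne_atTop 0] with m hm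
  have hm' : (m : ℝ) ≠ 0 := Nat.cast_ne_zero.mpr hm
  rw [Pi.div_apply, div_sub_one hm', div_div_eq_mul_div, Real.rpow_add_one hm']
  ring

theorem eventually_lt_nat_floor_mul {c : ℝ} (hc : 1 < c) :
    ∀ᶠ m : ℕ in atTop, m < ⌊c * m⌋₊ := by
  have h := tendsto_natCast_atTop_atTop.const_mul_atTop (sub_pos.mpr hc)
  filter_upwards [h.eventually_ge_atTop (1 : ℝ)] with m hm
  exact Nat.le_floor (by push_cast; linarith)

theorem eventually_nat_floor_mul_lt {c : ℝ} (hc : c < 1) :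
    ∀ᶠ m : ℕ in atTop, ⌊c * m⌋₊ < m := by
  filter_upwards [eventually_ne_atTop 0] with m hm
  exact (Nat.floor_lt' hm).mpr (mul_lt_of_lt_one_left (by positivity) hc)

theorem Antitone.tendsto_rpow_add_one_mul {a : ℕ → ℝ} {ν C : ℝ} (ha : Antitone a)
    (hs : Summable a) (htail : Tendsto (fun j : ℕ ↦ (j : ℝ) ^ ν * tailSum a j) atTop (𝓝 C)) :
    Tendsto (fun i : ℕ ↦ (i : ℝ) ^ (ν + 1) * a i) atTop (𝓝 (ν * C)) := by
  rw [mul_comm ν]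
  refine tendsto_of_tendsto_nhdsNE_of_eventually_bounds
    (q := fun c (m : ℕ) ↦
      (m : ℝ) ^ (ν + 1) * ((tailSum a m - tailSum a ⌊c * m⌋₊) / ((⌊c * m⌋₊ : ℝ) - m)))
    ((tendsto_one_sub_rpow_neg_div_sub_one ν).const_mul C) ?_ ?_ ?_
  · filter_upwards [self_mem_nhdsWithin, nhdsWithin_le_nhds (lt_mem_nhds one_pos)] with c hc₁ hc
    exact tendsto_rpow_add_one_mul_sub_div_floor htail hc hc₁
  · filter_upwards [self_mem_nhdsWithin] with c hc
    filter_upwards [eventually_lt_nat_floor_mul hc] with m hm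
    exact mul_le_mul_of_nonneg_left (ha.tailSum_sub_tailSum_div_le hs hm) (by positivity)
  · filter_upwards [self_mem_nhdsWithin] with c hc
    filter_upwards [eventually_nat_floor_mul_lt hc] with m hm
    exact mul_le_mul_of_nonneg_left (ha.le_tailSum_sub_tailSum_div hs hm) (by positivity)

theorem tauberian_theorem_for_series_general
    (ν C : ℝ)
    (a : ℕ → ℝ)
    (hmono : ∀ i : ℕ, 1 ≤ i → a (i + 1) ≤ a i)
    (hsum : Summable (fun i : ℕ => a (i + 1)))
    (htail : Tendsto (fun j : ℕ => (j : ℝ) ^ ν * ∑' k : ℕ, a (j + k))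
      atTop (nhds C)) :
    Tendsto (fun i : ℕ => (i : ℝ) ^ (ν + 1) * a i) atTop (nhds (ν * C)) := by
  set b : ℕ → ℝ := fun i ↦ a (max i 1)
  have hb_eq : ∀ i, 1 ≤ i → b i = a i := fun i hi ↦ by simp only [b, max_eq_left hi]
  have hb : Antitone b := antitone_nat_of_succ_le fun i ↦ by
    rcases i with _ | i
    · rfl
    · rw [hb_eq _ (Nat.le_add_left 1 i), hb_eq _ (Nat.le_add_left 1 (i + 1))]
      exact hmono (i + 1) (Nat.le_add_left 1 i)
  have hbs : Summable b :=
    (summable_nat_add_iff 1).mp (hsum.congr fun i ↦ (hb_eq (i + 1) (Nat.le_add_left 1 i)).symm)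
  have hb_tail : Tendsto (fun j : ℕ ↦ (j : ℝ) ^ ν * tailSum b j) atTop (𝓝 C) := by
    refine htail.congr' ?_
    filter_upwards [eventually_ge_atTop 1] with j hj
    simp only [tailSum, hb_eq _ (hj.trans (Nat.le_add_right j _))]
  refine (hb.tendsto_rpow_add_one_mul hbs hb_tail).congr' ?_
  filter_upwards [eventually_ge_atTop 1] with i hi
  rw [hb_eq i hi]

theorem tauberian_theorem_for_series
    (ν C : ℝ) (hν : 0 < ν) (hC : 0 ≤ C)
    (a : ℕ → ℝ)
    (hnonneg : ∀ i : ℕ, 1 ≤ i → 0 ≤ a i)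
    (hmono : ∀ i : ℕ, 1 ≤ i → a (i + 1) ≤ a i)
    (hsum : Summable (fun i : ℕ => a (i + 1)))
    (htail : Tendsto (fun j : ℕ => (j : ℝ) ^ ν * ∑' k : ℕ, a (j + k))
      atTop (nhds C)) :
    Tendsto (fun i : ℕ => (i : ℝ) ^ (ν + 1) * a i) atTop (nhds (ν * C)) :=
  tauberian_theorem_for_series_general ν C a hmono hsum htail
end

section
/- Let b⋆ > d⋆ ≥ 0, set r⋆ = b⋆ − d⋆ > 0 and W⋆(u) = (b⋆ e^{r⋆ u} − d⋆)/r⋆, and let r > r⋆. Set ν = r/r⋆, μ = b⋆/r⋆ and γ = (r − r⋆)/b⋆, and for integers i ≥ 1 define J^i = (r − r⋆) ∫_0^∞ (1 − 1/W⋆(u))^{i−1} e^{−(r−r⋆)u} W⋆(u)^{−2} du. Then lim_{i→∞} i^{1+ν} J^i = γ Γ(ν + 1) μ^ν, i.e., J^i ∼ i^{−1−ν} γ Γ(ν+1) μ^ν as i → ∞. -/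
/-!
Substituting `s = i / W⋆(u)`, and using `W⋆' = r⋆ W⋆ + d⋆ = b⋆ e^{r⋆ u}`, turns `i^{1+ν} J^i` into
`(r - r⋆) b⋆^{ν-1} ∫₀^i (1 - s/i)^{i-1} s^ν (r⋆ + d⋆ s/i)^{-ν} ds`. On `[0, i]` the integrand is
dominated by `e^{1-s} s^ν r⋆^{-ν}` and converges pointwise to `e^{-s} s^ν r⋆^{-ν}`, so by dominated
convergence the limit is `(r - r⋆) b⋆^{ν-1} r⋆^{-ν} Γ(ν + 1) = γ Γ(ν + 1) μ^ν`.
-/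

open MeasureTheory Set Filter Real Topology

theorem one_sub_div_pow_pred_le_exp {n : ℕ} {s : ℝ} (hsn : s ≤ n) (hn : 0 < n) :
    (1 - s / n) ^ (n - 1) ≤ exp (1 - s) := by
  have hn' : (0 : ℝ) < n := Nat.cast_pos.2 hn
  have hbase : 0 ≤ 1 - s / n := sub_nonneg.2 ((div_le_one hn').2 hsn)
  calc (1 - s / n) ^ (n - 1) ≤ exp (-(s / n)) ^ (n - 1) := by
        gcongr
        linarith [add_one_le_exp (-(s / n))]
    _ = exp (s / n - s) := by
        rw [← exp_nat_mul, Nat.cast_pred hn]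
        congr 1
        field_simp
        ring
    _ ≤ exp (1 - s) := by
        gcongr
        exact (div_le_one hn').2 hsn

theorem tendsto_one_sub_div_pow_pred (s : ℝ) :
    Tendsto (fun n : ℕ => (1 - s / n) ^ (n - 1)) atTop (𝓝 (exp (-s))) := by
  have hpow : Tendsto (fun n : ℕ => (1 - s / n) ^ n) atTop (𝓝 (exp (-s))) := by
    simpa only [neg_div, ← sub_eq_add_neg] using tendsto_one_add_div_pow_exp (-s)
  have hbase : Tendsto (fun n : ℕ => 1 - s / n) atTop (𝓝 1) := by
    simpa using tendsto_const_nhds.sub (tendsto_const_div_atTop_nhds_zero_nat s)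
  refine (div_one (exp (-s)) ▸ hpow.div hbase one_ne_zero).congr' ?_
  filter_upwards [eventually_gt_atTop ⌈s⌉₊] with n hn
  have hsn : s < n := (Nat.le_ceil s).trans_lt (Nat.cast_lt.2 hn)
  have hne : 1 - s / n ≠ 0 :=
    (sub_pos.2 ((div_lt_one (Nat.cast_pos.2 (by omega))).2 hsn)).ne'
  show (1 - s / n) ^ n / (1 - s / n) = _
  rw [pow_sub₀ _ hne (by omega), pow_one, div_eq_mul_inv]

theorem tendsto_integral_Ioo_one_sub_div_pow_pred_mul_rpow {a c ν : ℝ} (ha : 0 ≤ a) (hc : 0 < c)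
    (hν : 0 ≤ ν) :
    Tendsto (fun n : ℕ => ∫ s in Ioo 0 (n : ℝ), (1 - s / n) ^ (n - 1) * s ^ ν / (c + a * s / n) ^ ν)
      atTop (𝓝 (Gamma (ν + 1) / c ^ ν)) := by
  set f : ℕ → ℝ → ℝ := fun n s => (1 - s / n) ^ (n - 1) * s ^ ν / (c + a * s / n) ^ ν
  set F : ℕ → ℝ → ℝ := fun n => (Ioo 0 (n : ℝ)).indicator (f n)
  have hF : ∀ n : ℕ, ∫ s in Ioo 0 (n : ℝ), f n s = ∫ s in Ioi 0, F n s := fun n => by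
    rw [integral_indicator measurableSet_Ioo,
      Measure.restrict_restrict_of_subset Ioo_subset_Ioi_self]
  have hGamma : ∫ s in Ioi 0, exp (-s) * s ^ ν / c ^ ν = Gamma (ν + 1) / c ^ ν := by
    rw [integral_div, Gamma_eq_integral (by positivity), add_sub_cancel_right]
  rw [← hGamma]
  refine Tendsto.congr (fun n => (hF n).symm) ?_
  refine tendsto_integral_of_dominated_convergence (fun s => exp (1 - s) * s ^ ν / c ^ ν)
    (fun n => ((Measurable.indicator (by fun_prop) measurableSet_Ioo).aestronglyMeasurable))
    ?integrable (fun n => ?bound) ?limit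
  case integrable =>
    have h := ((GammaIntegral_convergent (by positivity : 0 < ν + 1)).const_mul (exp 1)).div_const
      (c ^ ν)
    refine IntegrableOn.congr_fun h (fun s _ => ?_) measurableSet_Ioi
    rw [add_sub_cancel_right, sub_eq_add_neg, exp_add, mul_assoc]
  case bound =>
    refine (ae_restrict_iff' measurableSet_Ioi).2 (Eventually.of_forall fun s (hs : 0 < s) => ?_)
    simp only [F, f]
    by_cases hsn : s ∈ Ioo 0 (n : ℝ)
    · have hn : 0 < n := Nat.cast_pos.1 (hs.trans hsn.2)
      have hbase : 0 ≤ 1 - s / n := sub_nonneg.2 ((div_le_one (hs.trans hsn.2)).2 hsn.2.le)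
      rw [indicator_of_mem hsn, Real.norm_of_nonneg (by positivity)]
      gcongr
      · exact one_sub_div_pow_pred_le_exp hsn.2.le hn
      · exact le_add_of_nonneg_right (by positivity)
    · rw [indicator_of_notMem hsn, norm_zero]
      positivity
  case limit =>
    refine (ae_restrict_iff' measurableSet_Ioi).2 (Eventually.of_forall fun s (hs : 0 < s) => ?_)
    have hden : Tendsto (fun n : ℕ => (c + a * s / n) ^ ν) atTop (𝓝 (c ^ ν)) := by
      have h := (tendsto_const_nhds (x := c)).add (tendsto_const_div_atTop_nhds_zero_nat (a * s))
      rw [add_zero] at h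
      exact h.rpow_const (Or.inl hc.ne')
    refine (((tendsto_one_sub_div_pow_pred s).mul_const (s ^ ν)).div hden (by positivity)).congr' ?_
    filter_upwards [eventually_gt_atTop ⌈s⌉₊] with n hn
    have hsn : s ∈ Ioo 0 (n : ℝ) := ⟨hs, (Nat.le_ceil s).trans_lt (Nat.cast_lt.2 hn)⟩
    exact (indicator_of_mem hsn (f n)).symm

noncomputable def birthDeathScale (b d u : ℝ) : ℝ := (b * exp ((b - d) * u) - d) / (b - d)

section BirthDeathScale

variable {b d : ℝ}

theorem birthDeathScale_zero (hdb : d ≠ b) : birthDeathScale b d 0 = 1 := by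
  rw [birthDeathScale, mul_zero, exp_zero, mul_one, div_self (sub_ne_zero.2 hdb.symm)]

theorem sub_mul_birthDeathScale_add (hdb : d ≠ b) (u : ℝ) :
    (b - d) * birthDeathScale b d u + d = b * exp ((b - d) * u) := by
  rw [birthDeathScale, mul_div_cancel₀ _ (sub_ne_zero.2 hdb.symm), sub_add_cancel]

theorem hasDerivAt_birthDeathScale (hdb : d ≠ b) (u : ℝ) :
    HasDerivAt (birthDeathScale b d) (b * exp ((b - d) * u)) u := by
  have h := ((((hasDerivAt_id u).const_mul (b - d)).exp.const_mul b).sub_const d).div_const (b - d)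
  refine HasDerivAt.congr_deriv (f := birthDeathScale b d) h ?_
  field_simp [sub_ne_zero.2 hdb.symm]
  rfl

theorem strictMono_birthDeathScale (hb : 0 < b) (hdb : d < b) : StrictMono (birthDeathScale b d) :=
  fun u v huv => by
    unfold birthDeathScale
    gcongr

theorem one_lt_birthDeathScale (hb : 0 < b) (hdb : d < b) {u : ℝ} (hu : 0 < u) :
    1 < birthDeathScale b d u :=
  birthDeathScale_zero hdb.ne ▸ strictMono_birthDeathScale hb hdb hu

theorem image_birthDeathScale_Ioi (hb : 0 < b) (hdb : d < b) :
    birthDeathScale b d '' Ioi 0 = Ioi 1 := by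
  have hmono := strictMono_birthDeathScale hb hdb
  refine Subset.antisymm ?_ fun w (hw : 1 < w) => ?_
  · rintro _ ⟨u, hu, rfl⟩
    exact one_lt_birthDeathScale hb hdb hu
  · have hc : 0 < b - d := sub_pos.2 hdb
    have hpos : 0 < ((b - d) * w + d) / b := by
      apply div_pos _ hb
      nlinarith
    set u := log (((b - d) * w + d) / b) / (b - d)
    have hu : birthDeathScale b d u = w := by
      rw [birthDeathScale, mul_div_cancel₀ _ hc.ne', exp_log hpos, mul_div_cancel₀ _ hb.ne']
      field_simp
      ring
    refine ⟨u, ?_, hu⟩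
    rw [mem_Ioi, ← hmono.lt_iff_lt, hu, birthDeathScale_zero hdb.ne]
    exact hw

theorem integral_Ioo_eq_integral_Ioi_div_birthDeathScale (hb : 0 < b) (hdb : d < b) {N : ℝ}
    (hN : 0 < N) (g : ℝ → ℝ) :
    ∫ s in Ioo 0 N, g s = ∫ u in Ioi 0,
      N * b * exp ((b - d) * u) / birthDeathScale b d u ^ 2 * g (N / birthDeathScale b d u) := by
  set W := birthDeathScale b d
  have hW : ∀ u ∈ Ioi (0 : ℝ), 0 < W u := fun u hu =>
    one_pos.trans (one_lt_birthDeathScale hb hdb hu)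
  have himage : (fun u => N / W u) '' Ioi 0 = Ioo 0 N := by
    simp_rw [div_eq_mul_inv]
    rw [← image_image (N * ·), ← image_image Inv.inv, image_birthDeathScale_Ioi hb hdb,
      image_inv_eq_inv, inv_Ioi₀ one_pos, inv_one, image_mul_left_Ioo hN, mul_zero, mul_one]
  have hderiv : ∀ u ∈ Ioi 0, HasDerivWithinAt (fun u => N / W u)
      (-(N * b * exp ((b - d) * u) / W u ^ 2)) (Ioi 0) u := fun u hu => by
    refine (((hasDerivAt_const u N).div (hasDerivAt_birthDeathScale hdb.ne u)
      (hW u hu).ne').congr_deriv ?_).hasDerivWithinAt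
    ring
  have hinj : InjOn (fun u => N / W u) (Ioi 0) := StrictAntiOn.injOn fun u hu v hv huv =>
    div_lt_div_of_pos_left hN (hW u hu) (strictMono_birthDeathScale hb hdb huv)
  rw [← himage, integral_image_eq_integral_abs_deriv_smul measurableSet_Ioi hderiv hinj]
  refine setIntegral_congr_fun measurableSet_Ioi fun u hu => ?_
  have := hW u hu
  rw [smul_eq_mul, abs_neg, abs_of_pos (by positivity)]

theorem rpow_mul_integral_Ioi_birthDeathScale_eq {r ν : ℝ} (hb : 0 < b) (hdb : d < b)
    (hν : ν = r / (b - d)) (k : ℕ) {N : ℝ} (hN : 0 < N) :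
    N ^ (1 + ν) * ∫ u in Ioi 0, (1 - 1 / birthDeathScale b d u) ^ k *
        exp (-((r - (b - d)) * u)) / birthDeathScale b d u ^ 2 =
      b ^ (ν - 1) * ∫ s in Ioo 0 N, (1 - s / N) ^ k * s ^ ν / (b - d + d * s / N) ^ ν := by
  rw [integral_Ioo_eq_integral_Ioi_div_birthDeathScale hb hdb hN, ← integral_const_mul,
    ← integral_const_mul]
  refine setIntegral_congr_fun measurableSet_Ioi fun u (hu : 0 < u) => ?_
  have hW : 0 < birthDeathScale b d u := one_pos.trans (one_lt_birthDeathScale hb hdb hu)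
  have hscale := sub_mul_birthDeathScale_add hdb.ne u
  set w := birthDeathScale b d u
  have hE : 0 < exp ((b - d) * u) := exp_pos _
  have hsub : b - d + d * (N / w) / N = b * exp ((b - d) * u) / w := by
    rw [← hscale]
    field_simp
  have hrpow : (N / w) ^ ν / (b * exp ((b - d) * u) / w) ^ ν =
      N ^ ν / (b ^ ν * exp (r * u)) := by
    rw [← div_rpow (by positivity) (by positivity), div_div_div_cancel_right₀ hW.ne',
      div_rpow hN.le (by positivity), mul_rpow hb.le hE.le, ← exp_mul, hν]
    field_simp [(sub_pos.2 hdb).ne']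
  have hexp : exp (-((r - (b - d)) * u)) = exp ((b - d) * u) / exp (r * u) := by
    rw [← exp_sub]
    ring_nf
  rw [hsub, mul_div_assoc ((1 - N / w / N) ^ k), hrpow, hexp, rpow_add hN, rpow_sub_one hb.ne',
    rpow_one]
  field_simp

end BirthDeathScale

theorem limiting_frequency_spectrum_asymptotics_supercritical
    (bs ds r : ℝ) (hd : 0 ≤ ds) (hbd : ds < bs)
    (rs : ℝ) (hrs : rs = bs - ds) (hr : rs < r)
    (Ws : ℝ → ℝ)
    (hWs : ∀ u : ℝ, Ws u = (bs * Real.exp (rs * u) - ds) / rs)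
    (ν μ γ : ℝ) (hν : ν = r / rs) (hμ : μ = bs / rs) (hγ : γ = (r - rs) / bs)
    (J : ℕ → ℝ)
    (hJ : ∀ i : ℕ, 1 ≤ i → J i = (r - rs) *
      ∫ u in Ioi (0:ℝ),
        (1 - 1 / Ws u) ^ (i - 1) * Real.exp (-((r - rs) * u)) / (Ws u) ^ 2) :
    Tendsto (fun i : ℕ => (i : ℝ) ^ (1 + ν) * J i) atTop
      (nhds (γ * Real.Gamma (ν + 1) * μ ^ ν)) := by
  subst hrs hμ hγ
  obtain rfl : Ws = birthDeathScale bs ds := funext hWs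
  have hb : 0 < bs := hd.trans_lt hbd
  have hc : 0 < bs - ds := sub_pos.2 hbd
  have hν0 : 0 ≤ ν := hν ▸ div_nonneg (hc.trans hr).le hc.le
  have hJ_eq : ∀ᶠ n : ℕ in atTop, (r - (bs - ds)) * bs ^ (ν - 1) *
      ∫ s in Ioo 0 (n : ℝ), (1 - s / n) ^ (n - 1) * s ^ ν / (bs - ds + ds * s / n) ^ ν =
      (n : ℝ) ^ (1 + ν) * J n := by
    filter_upwards [eventually_ge_atTop 1] with n hn
    rw [hJ n hn, mul_left_comm, rpow_mul_integral_Ioi_birthDeathScale_eq hb hbd hν _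
      (Nat.cast_pos.2 hn), mul_assoc]
  convert ((tendsto_integral_Ioo_one_sub_div_pow_pred_mul_rpow hd hc hν0).const_mul
    ((r - (bs - ds)) * bs ^ (ν - 1))).congr' hJ_eq using 2
  rw [div_rpow hb.le hc.le, rpow_sub_one hb.ne']
  field_simp
end

section
/- Let b⋆ > 0, d⋆ > b⋆, set r⋆ = b⋆ − d⋆ < 0 and W⋆(x) = (b⋆ e^{r⋆ x} − d⋆)/r⋆, let r > 0, and for t > 0 set c_t = r t/(r − r⋆). Then for every a ∈ ℝ, lim_{t→∞} (r − r⋆) e^{r t} ∫_{a + c_t}^{t} e^{−(r−r⋆)x} / W⋆(x) dx = (−r⋆/d⋆) e^{−(r−r⋆)a}. -/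
/-!
On `[a + c t, t]` the factor `1 / W⋆ x = -r⋆ / (d⋆ - b⋆ e^{r⋆ x})` of the integrand is squeezed
between `-r⋆ / d⋆` and `-r⋆ / (d⋆ - b⋆ e^{r⋆ (a + c t)})`, and both bounds tend to `-r⋆ / d⋆`
because `a + c t → ∞`. What remains is the integral of `e^{-(r - r⋆) x}`, and `c t` is chosen
exactly so that `(r - r⋆) e^{r t}` times it equals `e^{-(r - r⋆) a} - e^{r⋆ t}`.
-/

open MeasureTheory Set Filter Real

theorem integral_exp_neg_mul {p : ℝ} (hp : p ≠ 0) (A B : ℝ) :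
    ∫ x in A..B, exp (-(p * x)) = (exp (-(p * A)) - exp (-(p * B))) / p := by
  simp_rw [← neg_mul]
  rw [intervalIntegral.integral_comp_mul_left (fun x => exp x) (neg_ne_zero.2 hp), integral_exp,
    smul_eq_mul]
  field_simp
  ring

theorem mul_exp_mul_integral_exp_neg_mul {ρ : ℝ} (hρ : ρ ≠ 0) (r A t : ℝ) :
    ρ * exp (r * t) * ∫ x in A..t, exp (-(ρ * x)) = exp (r * t - ρ * A) - exp ((r - ρ) * t) := by
  rw [integral_exp_neg_mul hρ]
  field_simp
  rw [mul_sub, ← exp_add, ← exp_add]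
  ring_nf

theorem integral_mul_mem_Icc {f g : ℝ → ℝ} {A B m M : ℝ} (hAB : A ≤ B)
    (hf : ContinuousOn f (Icc A B)) (hg : ContinuousOn g (Icc A B))
    (hf0 : ∀ x ∈ Icc A B, 0 ≤ f x) (hgmM : ∀ x ∈ Icc A B, g x ∈ Icc m M) :
    ∫ x in A..B, f x * g x ∈ Icc (m * ∫ x in A..B, f x) (M * ∫ x in A..B, f x) := by
  have hfi := hf.intervalIntegrable_of_Icc (μ := volume) hAB
  have hfgi := (hf.mul hg).intervalIntegrable_of_Icc (μ := volume) hAB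
  rw [← intervalIntegral.integral_const_mul, ← intervalIntegral.integral_const_mul]
  constructor
  · refine intervalIntegral.integral_mono_on hAB (hfi.const_mul m) hfgi fun x hx => ?_
    rw [mul_comm]
    exact mul_le_mul_of_nonneg_left (hgmM x hx).1 (hf0 x hx)
  · refine intervalIntegral.integral_mono_on hAB hfgi (hfi.const_mul M) fun x hx => ?_
    rw [mul_comm M]
    exact mul_le_mul_of_nonneg_left (hgmM x hx).2 (hf0 x hx)

theorem inv_scale_mem_Icc {bs ds rs L x : ℝ} (hbs : 0 ≤ bs) (hrs : rs < 0)
    (hL : bs * exp (rs * L) < ds) (hx : L ≤ x) :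
    ((bs * exp (rs * x) - ds) / rs)⁻¹ ∈ Icc (-rs / ds) (-rs / (ds - bs * exp (rs * L))) := by
  have hxL : bs * exp (rs * x) ≤ bs * exp (rs * L) :=
    mul_le_mul_of_nonneg_left (exp_le_exp.2 (by nlinarith)) hbs
  have hx0 : 0 ≤ bs * exp (rs * x) := by positivity
  rw [inv_div, ← neg_div_neg_eq rs, neg_sub]
  constructor <;> apply div_le_div_of_nonneg_left <;> linarith

theorem mul_exp_mul_integral_div_scale_mem_Icc {bs ds rs ρ A t : ℝ} (r : ℝ) (hbs : 0 ≤ bs)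
    (hrs : rs < 0) (hρ : 0 < ρ) (hAt : A ≤ t) (hA : bs * exp (rs * A) < ds) :
    ρ * exp (r * t) * ∫ x in A..t, exp (-(ρ * x)) / ((bs * exp (rs * x) - ds) / rs) ∈
      Icc (-rs / ds * (exp (r * t - ρ * A) - exp ((r - ρ) * t)))
        (-rs / (ds - bs * exp (rs * A)) * (exp (r * t - ρ * A) - exp ((r - ρ) * t))) := by
  have hinv := fun x (hx : x ∈ Icc A t) => inv_scale_mem_Icc hbs hrs hA hx.1
  have hds : 0 < ds := by linarith [mul_nonneg hbs (exp_pos (rs * A)).le]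
  have hscale : ∀ x ∈ Icc A t, (bs * exp (rs * x) - ds) / rs ≠ 0 := fun x hx h0 => by
    have := (hinv x hx).1
    rw [h0, inv_zero] at this
    linarith [div_pos (neg_pos.2 hrs) hds]
  have hI := integral_mul_mem_Icc (f := fun x => ρ * exp (r * t) * exp (-(ρ * x)))
    (g := fun x => ((bs * exp (rs * x) - ds) / rs)⁻¹) hAt (by fun_prop)
    ((by fun_prop : Continuous _).continuousOn.inv₀ hscale) (fun x _ => by positivity) hinv
  rw [intervalIntegral.integral_const_mul, mul_exp_mul_integral_exp_neg_mul hρ.ne'] at hI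
  convert hI using 1
  rw [← intervalIntegral.integral_const_mul]
  congr 1 with x
  ring

section Threshold

variable {r rs : ℝ} (hr : 0 < r) (hrs : rs < 0)
include hr hrs

theorem tendsto_add_mul_div_atTop (a : ℝ) :
    Tendsto (fun t => a + r * t / (r - rs)) atTop atTop := by
  refine tendsto_atTop_add_const_left _ a ?_
  simp_rw [mul_div_right_comm r]
  exact tendsto_id.const_mul_atTop (div_pos hr (by linarith))

theorem eventually_add_mul_div_le (a : ℝ) :
    ∀ᶠ t in atTop, a + r * t / (r - rs) ≤ t := by
  filter_upwards [eventually_ge_atTop (a * (r - rs) / -rs)] with t ht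
  have hρ : 0 < r - rs := by linarith
  rw [div_le_iff₀ (by linarith)] at ht
  rw [← sub_nonneg, show t - (a + r * t / (r - rs)) = (-rs * t - a * (r - rs)) / (r - rs) by
    field_simp; ring]
  exact div_nonneg (by linarith) hρ.le

end Threshold

theorem mul_sub_mul_add_div_eq_neg_mul {ρ : ℝ} (hρ : ρ ≠ 0) (r a t : ℝ) :
    r * t - ρ * (a + r * t / ρ) = -(ρ * a) := by
  field_simp
  ring

theorem expected_number_of_old_families_subcritical_clonal
    (bs ds r : ℝ) (hb : 0 < bs) (hd : bs < ds) (hr : 0 < r)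
    (rs : ℝ) (hrs : rs = bs - ds)
    (Ws : ℝ → ℝ)
    (hWs : ∀ x : ℝ, Ws x = (bs * Real.exp (rs * x) - ds) / rs)
    (c : ℝ → ℝ) (hc : ∀ t : ℝ, c t = r * t / (r - rs)) :
    ∀ a : ℝ,
      Tendsto
        (fun t : ℝ => (r - rs) * Real.exp (r * t) *
          ∫ x in (a + c t)..t, Real.exp (-((r - rs) * x)) / Ws x)
        atTop
        (nhds ((-rs / ds) * Real.exp (-((r - rs) * a)))) := by
  intro a
  obtain rfl : Ws = _ := funext hWs
  obtain rfl : c = _ := funext hc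
  beta_reduce
  have hrs0 : rs < 0 := by linarith
  have hds : 0 < ds := by linarith
  have hρ : 0 < r - rs := by linarith
  have hexpL : Tendsto (fun t => exp (rs * (a + r * t / (r - rs)))) atTop (nhds 0) :=
    tendsto_exp_atBot.comp ((tendsto_add_mul_div_atTop hr hrs0 a).const_mul_atTop_of_neg hrs0)
  have hexp : Tendsto (fun t => exp (rs * t)) atTop (nhds 0) :=
    tendsto_exp_atBot.comp (tendsto_id.const_mul_atTop_of_neg hrs0)
  have hbounds : ∀ᶠ t in atTop, (r - rs) * exp (r * t) *
      ∫ x in (a + r * t / (r - rs))..t, exp (-((r - rs) * x)) / ((bs * exp (rs * x) - ds) / rs) ∈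
        Icc (-rs / ds * (exp (-((r - rs) * a)) - exp (rs * t)))
          (-rs / (ds - bs * exp (rs * (a + r * t / (r - rs)))) *
            (exp (-((r - rs) * a)) - exp (rs * t))) := by
    filter_upwards [eventually_add_mul_div_le hr hrs0 a,
      (hexpL.const_mul bs).eventually_lt_const (by simpa using hds)] with t hLt hLd
    simpa only [mul_sub_mul_add_div_eq_neg_mul hρ.ne', sub_sub_cancel] using
      mul_exp_mul_integral_div_scale_mem_Icc r hb.le hrs0 hρ hLt hLd
  refine tendsto_of_tendsto_of_tendsto_of_le_of_le' ?_ ?_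
    (hbounds.mono fun _ h => h.1) (hbounds.mono fun _ h => h.2)
  · simpa using (tendsto_const_nhds.sub hexp).const_mul (-rs / ds)
  · simpa using (tendsto_const_nhds.div (tendsto_const_nhds.sub (hexpL.const_mul bs))
      (by simpa using hds.ne')).mul (tendsto_const_nhds.sub hexp)
end
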